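/- There is no probability measure μ on {−1, +1}³ reproducing the quantum singlet joint probabilities for coplanar directions at angles θ₁ = 0, θ₂ = π/3, θ₃ = 2π/3; that is, no probability measure μ on {−1,+1}³ satisfies μ{s : sᵢ = +1 and sⱼ = −1} = (1/2)·sin²((θᵢ − θⱼ)/2) simultaneously for the pairs (i,j) = (1,2), (2,3), (1,3). Indeed (1/2)sin²(π/3) = 3/8 exceeds (1/2)sin²(π/6) + (1/2)sin²(π/6) = 1/4, violating Wigner's inequality. -/

import Mathlib

open MeasureTheory Real

noncomputable section

/-- The three coplanar measurement directions `θ₁ = 0`, `θ₂ = π/3`, `θ₃ = 2π/3`. -/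
def angles : Fin 3 → ℝ := ![0, π / 3, 2 * π / 3]

/-!
Wigner's inequality: a hidden-variable state with `s i = +1` and `s k = -1` has `s j = -1`,
so it lies in `{s i = +1, s j = -1}`, or `s j = +1`, so it lies in `{s j = +1, s k = -1}`.
Hence `μ{s i = +1, s k = -1} ≤ μ{s i = +1, s j = -1} + μ{s j = +1, s k = -1}` for every
measure `μ`. At the angles `0, π/3, 2π/3` the singlet probabilities are `1/8, 1/8, 3/8`,
and `3/8 > 1/8 + 1/8`.
-/

theorem wigner_inequality {ι : Type*} (μ : Measure (ι → ({-1, 1} : Set ℤ))) (i j k : ι) :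
    μ {s | (s i : ℤ) = 1 ∧ (s k : ℤ) = -1} ≤
      μ {s | (s i : ℤ) = 1 ∧ (s j : ℤ) = -1} + μ {s | (s j : ℤ) = 1 ∧ (s k : ℤ) = -1} := by
  have hsub : {s : ι → ({-1, 1} : Set ℤ) | (s i : ℤ) = 1 ∧ (s k : ℤ) = -1} ⊆
      {s | (s i : ℤ) = 1 ∧ (s j : ℤ) = -1} ∪ {s | (s j : ℤ) = 1 ∧ (s k : ℤ) = -1} := by
    rintro s ⟨hi, hk⟩
    rcases (s j).2 with hj | hj
    · exact Or.inl ⟨hi, hj⟩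
    · exact Or.inr ⟨hj, hk⟩
  exact (measure_mono hsub).trans (measure_union_le _ _)

theorem singlet_prob_angles_zero_one :
    (1 / 2) * sin ((angles 0 - angles 1) / 2) ^ 2 = 1 / 8 := by
  have h : (angles 0 - angles 1) / 2 = -(π / 6) := by simp [angles]; ring
  rw [h, sin_neg, neg_sq, sin_pi_div_six]
  norm_num

theorem singlet_prob_angles_one_two :
    (1 / 2) * sin ((angles 1 - angles 2) / 2) ^ 2 = 1 / 8 := by
  have h : (angles 1 - angles 2) / 2 = -(π / 6) := by simp [angles]; ring
  rw [h, sin_neg, neg_sq, sin_pi_div_six]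
  norm_num

theorem singlet_prob_angles_zero_two :
    (1 / 2) * sin ((angles 0 - angles 2) / 2) ^ 2 = 3 / 8 := by
  have h : (angles 0 - angles 2) / 2 = -(π / 3) := by simp [angles]; ring
  rw [h, sin_neg, neg_sq, sq_sin_pi_div_three]
  norm_num

theorem no_measure_reproduces_quantum_general
    (μ : Measure (Fin 3 → ({-1, 1} : Set ℤ))) :
    ¬ (μ {s | (s 0 : ℤ) = 1 ∧ (s 1 : ℤ) = -1}
         = ENNReal.ofReal ((1 / 2) * Real.sin ((angles 0 - angles 1) / 2) ^ 2) ∧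
       μ {s | (s 1 : ℤ) = 1 ∧ (s 2 : ℤ) = -1}
         = ENNReal.ofReal ((1 / 2) * Real.sin ((angles 1 - angles 2) / 2) ^ 2) ∧
       μ {s | (s 0 : ℤ) = 1 ∧ (s 2 : ℤ) = -1}
         = ENNReal.ofReal ((1 / 2) * Real.sin ((angles 0 - angles 2) / 2) ^ 2)) := by
  rintro ⟨h01, h12, h02⟩
  have hwigner := wigner_inequality μ 0 1 2
  rw [h01, h12, h02, singlet_prob_angles_zero_one, singlet_prob_angles_one_two,
    singlet_prob_angles_zero_two, ← ENNReal.ofReal_add (by norm_num) (by norm_num),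
    ENNReal.ofReal_le_ofReal_iff (by norm_num)] at hwigner
  norm_num at hwigner

/-- No probability measure on `{-1,+1}³` reproduces the quantum singlet joint
probabilities `μ{sᵢ = +1, sⱼ = -1} = (1/2) sin²((θᵢ - θⱼ)/2)` for the coplanar
directions `θ₁ = 0, θ₂ = π/3, θ₃ = 2π/3` simultaneously for pairs
`(1,2), (2,3), (1,3)`. -/
theorem no_measure_reproduces_quantum
    (μ : Measure (Fin 3 → ({-1, 1} : Set ℤ))) (hμ : IsProbabilityMeasure μ) :
    ¬ (μ {s | (s 0 : ℤ) = 1 ∧ (s 1 : ℤ) = -1}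
         = ENNReal.ofReal ((1 / 2) * Real.sin ((angles 0 - angles 1) / 2) ^ 2) ∧
       μ {s | (s 1 : ℤ) = 1 ∧ (s 2 : ℤ) = -1}
         = ENNReal.ofReal ((1 / 2) * Real.sin ((angles 1 - angles 2) / 2) ^ 2) ∧
       μ {s | (s 0 : ℤ) = 1 ∧ (s 2 : ℤ) = -1}
         = ENNReal.ofReal ((1 / 2) * Real.sin ((angles 0 - angles 2) / 2) ^ 2)) :=
  no_measure_reproduces_quantum_general μ
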